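/- Suppose e, h : ω → ω are nondecreasing, h is unbounded, and e(l) ≤ min{n : l < h(2^n)} for all l ∈ ω. Let f be any gauge function with f(2^{-k}) = 2^{-e(k)} for all k ∈ ω. Then every A ⊆ 2^ω with ℋ^f(A) = 0 belongs to J_h; that is, there exists σ : ω → 2^{<ω} with |σ(n)| = h(n) for all n and A ⊆ [σ]_∞. -/

import Mathlib

/-!
For each level `m`, cover `A` by cylinders `[x_{m,n} ↾ L_{m,n}]` with
`∑ₙ f(2^{-L_{m,n}}) ≤ εₘ`, where `∑ₘ εₘ ≤ 1/2`: a set `V` of positive diameter lies in a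
cylinder `[x ↾ L]` with `2^{-L} ≤ diam V`, and a point lies in cylinders of arbitrarily
small gauge. Since `f(2^{-L}) = 2^{-e(L)}`, the weights `2^{-e(L_q)}` of all these
cylinders sum to at most `1/2`, so listing them by increasing `e(L_q)` gives an injective `ι`
with `2 (ι q + 1) ≤ 2^{e(L_q)}`. The hypothesis on `e` turns this into `h(ι q) ≤ L_q`, so
`σ(ι q) := x_q ↾ h(ι q)` works: a point of `A` lies in a cylinder of every level, hence
extends `σ n` for infinitely many `n`.
-/
open MeasureTheory Set
open scoped ENNReal

/-- The Cantor space `2^ω = ℕ → Bool` carries the metric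
`d(x,y) = 2^{-min{n : x n ≠ y n}}` (and `d(x,x) = 0`). -/
noncomputable local instance cantorMetric : MetricSpace (ℕ → Bool) := PiNat.metricSpace

/-- A gauge function: a nondecreasing function `f : [0,∞) → [0,∞)` with `f 0 = 0` and
`lim_{x → 0⁺} f x = 0`. -/
structure IsGauge (f : ℝ → ℝ) : Prop where
  nonneg : ∀ x : ℝ, 0 ≤ x → 0 ≤ f x
  zero : f 0 = 0
  mono : MonotoneOn f (Ici 0)
  tendsto_zero : Filter.Tendsto f (nhdsWithin 0 (Ioi 0)) (nhds 0)

/-- The value `f(diam)` of a gauge function `f` on an extended-real diameter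
(infinite diameters are sent to `∞`). -/
noncomputable def gaugeFn (f : ℝ → ℝ) : ℝ≥0∞ → ℝ≥0∞ := fun d =>
  if d = ∞ then ∞ else ENNReal.ofReal (f d.toReal)

/-- The Hausdorff (outer) measure `ℋ^f` with gauge function `f`. -/
noncomputable def gaugeMeasure {X : Type*} [EMetricSpace X] (f : ℝ → ℝ) : OuterMeasure X :=
  OuterMeasure.mkMetric (gaugeFn f)

/-- `s` is an initial segment of `x : 2^ω`. -/
def InitSeg (s : List Bool) (x : ℕ → Bool) : Prop :=
  ∀ i : ℕ, (hi : i < s.length) → s.get ⟨i, hi⟩ = x i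

/-- `[σ]_∞` : the set of `x ∈ 2^ω` having `σ n` as an initial segment for infinitely
many `n`. -/
def limsupCyl (σ : ℕ → List Bool) : Set (ℕ → Bool) :=
  {x | ∃ᶠ n in Filter.atTop, InitSeg (σ n) x}

/-- The ideal `J_g = {A ⊆ 2^ω : ∃ σ, ht σ = g and A ⊆ [σ]_∞}`. -/
def Jg (g : ℕ → ℕ) : Set (Set (ℕ → Bool)) :=
  {A | ∃ σ : ℕ → List Bool, (∀ n, (σ n).length = g n) ∧ A ⊆ limsupCyl σ}

open Filter PiNat Metric Topology

section Kraft

variable {S : Type*}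

theorem two_inv_pow_mul_two_pow (n : ℕ) : (2⁻¹ : ℝ≥0∞) ^ n * 2 ^ n = 1 := by
  rw [← mul_pow, ENNReal.inv_mul_cancel two_ne_zero ENNReal.ofNat_ne_top, one_pow]

theorem card_mul_two_pow_le_of_tsum_le {k : S → ℕ} {j : ℕ}
    (hk : ∑' p, (2⁻¹ : ℝ≥0∞) ^ k p ≤ 2⁻¹ ^ j) {K : ℕ} {F : Finset S}
    (hF : ∀ p ∈ F, k p ≤ K) : F.card * 2 ^ j ≤ 2 ^ K := by
  have hsum : (F.card : ℝ≥0∞) * 2⁻¹ ^ K ≤ 2⁻¹ ^ j :=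
    calc (F.card : ℝ≥0∞) * 2⁻¹ ^ K = F.card • (2⁻¹ : ℝ≥0∞) ^ K :=
          (nsmul_eq_mul _ _).symm
      _ ≤ ∑ p ∈ F, (2⁻¹ : ℝ≥0∞) ^ k p := Finset.card_nsmul_le_sum _ _ _ fun p hp =>
          pow_le_pow_right_of_le_one' (ENNReal.inv_le_one.2 one_le_two) (hF p hp)
      _ ≤ ∑' p, (2⁻¹ : ℝ≥0∞) ^ k p := ENNReal.sum_le_tsum F
      _ ≤ 2⁻¹ ^ j := hk
  have : (F.card : ℝ≥0∞) * 2 ^ j ≤ 2 ^ K :=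
    calc (F.card : ℝ≥0∞) * 2 ^ j = F.card * 2⁻¹ ^ K * 2 ^ K * 2 ^ j := by
          rw [mul_assoc (F.card : ℝ≥0∞), two_inv_pow_mul_two_pow, mul_one]
      _ ≤ 2⁻¹ ^ j * 2 ^ K * 2 ^ j := by gcongr
      _ = 2 ^ K := by rw [mul_right_comm, two_inv_pow_mul_two_pow, one_mul]
  exact_mod_cast this

theorem finite_setOf_le_of_tsum_le {k : S → ℕ} {j : ℕ}
    (hk : ∑' p, (2⁻¹ : ℝ≥0∞) ^ k p ≤ 2⁻¹ ^ j) (K : ℕ) : {p | k p ≤ K}.Finite := by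
  by_contra hinf
  obtain ⟨F, hFsub, hFcard⟩ := Set.Infinite.exists_subset_card_eq hinf (2 ^ K + 1)
  have := card_mul_two_pow_le_of_tsum_le hk fun p hp => hFsub hp
  rw [hFcard] at this
  nlinarith [Nat.one_le_two_pow (n := j)]

theorem exists_injective_lt_ncard [Countable S] (k : S → ℕ)
    (hk : ∀ K, {p | k p ≤ K}.Finite) :
    ∃ ι : S → ℕ, Function.Injective ι ∧ ∀ p, ι p < {q | k q ≤ k p}.ncard := by
  obtain ⟨enc, henc⟩ := Countable.exists_injective_nat S
  let key : S → Lex (ℕ × ℕ) := fun p => toLex (k p, enc p)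
  have hkey : Function.Injective key := fun p q hpq => henc (congrArg Prod.snd hpq)
  let below : S → Set S := fun p => {q | key q < key p}
  have hbelow : ∀ p, below p ⊆ {q | k q ≤ k p} := fun p q hq =>
    (Prod.Lex.lt_iff.1 hq).elim le_of_lt fun h => h.1.le
  have hfin : ∀ p, (below p).Finite := fun p => (hk (k p)).subset (hbelow p)
  have hlt : ∀ p q, key p < key q → (below p).ncard < (below q).ncard := fun p q hpq =>
    Set.ncard_lt_ncard
      ⟨fun r hr => lt_trans hr hpq, fun h => lt_irrefl (key p) (h hpq)⟩ (hfin q)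
  refine ⟨fun p => (below p).ncard, fun p q hpq => ?_, fun p => ?_⟩
  · by_contra hne
    rcases lt_or_gt_of_ne (hkey.ne hne) with h | h
    · exact (hlt p q h).ne hpq
    · exact (hlt q p h).ne' hpq
  · calc (below p).ncard < (insert p (below p)).ncard :=
          Set.ncard_lt_ncard (Set.ssubset_insert (lt_irrefl (key p))) ((hfin p).insert p)
      _ ≤ {q | k q ≤ k p}.ncard :=
          Set.ncard_le_ncard (Set.insert_subset (le_refl (k p)) (hbelow p)) (hk (k p))

theorem exists_injective_two_pow_mul_succ_le [Countable S] (k : S → ℕ) {j : ℕ}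
    (hk : ∑' p, (2⁻¹ : ℝ≥0∞) ^ k p ≤ 2⁻¹ ^ j) :
    ∃ ι : S → ℕ, Function.Injective ι ∧ ∀ p, 2 ^ j * (ι p + 1) ≤ 2 ^ k p := by
  have hfin := finite_setOf_le_of_tsum_le hk
  obtain ⟨ι, hι, hlt⟩ := exists_injective_lt_ncard k hfin
  refine ⟨ι, hι, fun p => ?_⟩
  have hcard := card_mul_two_pow_le_of_tsum_le hk (F := (hfin (k p)).toFinset)
    fun q hq => (hfin (k p)).mem_toFinset.1 hq
  rw [← Set.ncard_eq_toFinset_card _ (hfin (k p))] at hcard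
  calc 2 ^ j * (ι p + 1) ≤ 2 ^ j * {q | k q ≤ k p}.ncard :=
        Nat.mul_le_mul_left _ (hlt p)
    _ ≤ 2 ^ k p := by rwa [mul_comm]

end Kraft

section Gauge

theorem ofReal_one_half_pow (n : ℕ) : ENNReal.ofReal ((1 / 2) ^ n) = 2⁻¹ ^ n := by
  rw [ENNReal.ofReal_pow one_half_pos.le, one_div, ENNReal.ofReal_inv_of_pos two_pos,
    ENNReal.ofReal_ofNat]

variable {f : ℝ → ℝ}

theorem gaugeFn_ofReal {x : ℝ} (hx : 0 ≤ x) :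
    gaugeFn f (ENNReal.ofReal x) = ENNReal.ofReal (f x) := by
  simp [gaugeFn, ENNReal.toReal_ofReal hx]

theorem IsGauge.gaugeFn_mono (hf : IsGauge f) : Monotone (gaugeFn f) := by
  intro a b hab
  rcases eq_or_ne b ∞ with rfl | hb
  · simp [gaugeFn]
  simp only [gaugeFn, if_neg hb, if_neg (ne_top_of_le_ne_top hb hab)]
  exact ENNReal.ofReal_le_ofReal <|
    hf.mono ENNReal.toReal_nonneg ENNReal.toReal_nonneg (ENNReal.toReal_mono hb hab)

theorem IsGauge.exists_half_pow_lt (hf : IsGauge f) {ε : ℝ≥0∞} (hε : 0 < ε) :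
    ∃ L : ℕ, ENNReal.ofReal (f ((1 / 2) ^ L)) < ε := by
  have hlim : Tendsto (fun L : ℕ => ENNReal.ofReal (f ((1 / 2) ^ L))) atTop (𝓝 0) := by
    simpa using ENNReal.tendsto_ofReal <| hf.tendsto_zero.comp <|
      tendsto_pow_atTop_nhdsWithin_zero_of_lt_one one_half_pos one_half_lt_one
  exact ((tendsto_order.1 hlim).2 ε hε).exists

theorem exists_cover_tsum_lt_of_gaugeMeasure_eq_zero {X : Type*} [EMetricSpace X]
    (hf : IsGauge f) {A : Set X} (hA : gaugeMeasure f A = 0) {ε : ℝ≥0∞} (hε : 0 < ε) :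
    ∃ t : ℕ → Set X, A ⊆ ⋃ n, t n ∧ ∑' n, gaugeFn f (ediam (t n)) < ε := by
  have hpre : OuterMeasure.mkMetric'.pre (fun s => gaugeFn f (ediam s)) 1 A = 0 :=
    le_zero_iff.1 <| hA ▸ le_iSup₂ (f := fun r (_ : 0 < r) =>
      OuterMeasure.mkMetric'.pre (X := X) (fun s => gaugeFn f (ediam s)) r) 1 one_pos A
  rw [OuterMeasure.mkMetric'.pre, OuterMeasure.boundedBy_apply] at hpre
  obtain ⟨t, ht⟩ := iInf_lt_iff.1 (hpre.trans_lt hε)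
  obtain ⟨hcover, hsum⟩ := iInf_lt_iff.1 ht
  refine ⟨t, hcover, lt_of_le_of_lt (ENNReal.tsum_le_tsum fun n => ?_) hsum⟩
  rcases (t n).eq_empty_or_nonempty with hempty | hne
  · simp [hempty, gaugeFn, hf.zero]
  · rw [iSup_pos hne]
    exact le_iInf fun _ => le_rfl

end Gauge

section Cylinder

theorem exists_cylinder_superset_of_ediam_pos {V : Set (ℕ → Bool)} (hV : 0 < ediam V) :
    ∃ (x : ℕ → Bool) (L : ℕ), V ⊆ cylinder x L ∧ ENNReal.ofReal ((1 / 2) ^ L) ≤ ediam V := by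
  obtain ⟨x, hx, -⟩ := ediam_pos_iff'.1 hV
  rcases eq_or_ne (ediam V) ∞ with htop | hfin
  · exact ⟨x, 0, by simp [cylinder_zero], htop ▸ le_top⟩
  have hd : 0 < (ediam V).toReal := ENNReal.toReal_pos hV.ne' hfin
  have hex : ∃ L : ℕ, (1 / 2 : ℝ) ^ L ≤ (ediam V).toReal :=
    (exists_pow_lt_of_lt_one hd one_half_lt_one).imp fun _ => le_of_lt
  -- `L := Nat.find hex` is minimal, so `diam V < 2^{-(L-1)}` and the points of `V` agree below `L`
  refine ⟨x, Nat.find hex, fun y hy => ?_, ?_⟩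
  · rcases hL : Nat.find hex with _ | n
    · simp [cylinder_zero]
    have hdist : dist y x < (1 / 2) ^ n := by
      calc dist y x ≤ (ediam V).toReal := by
            rw [dist_edist]; exact ENNReal.toReal_mono hfin (edist_le_ediam_of_mem hy hx)
        _ < (1 / 2) ^ n := not_le.1 (Nat.find_min hex (by omega))
    exact mem_cylinder_iff.2 fun i hi => apply_eq_of_dist_lt hdist (by omega)
  · exact (ENNReal.ofReal_le_iff_le_toReal hfin).2 (Nat.find_spec hex)

variable {f : ℝ → ℝ}

theorem IsGauge.exists_cylinder_superset (hf : IsGauge f) (V : Set (ℕ → Bool)) {ε : ℝ≥0∞}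
    (hε : 0 < ε) : ∃ (x : ℕ → Bool) (L : ℕ), V ⊆ cylinder x L ∧
      ENNReal.ofReal (f ((1 / 2) ^ L)) ≤ gaugeFn f (ediam V) + ε := by
  rcases (zero_le : 0 ≤ ediam V).eq_or_lt with hV | hV
  · obtain ⟨L, hL⟩ := hf.exists_half_pow_lt hε
    rcases (ediam_eq_zero_iff.1 hV.symm).eq_empty_or_singleton with rfl | ⟨x, rfl⟩
    · exact ⟨fun _ => false, L, empty_subset _, hL.le.trans le_add_self⟩
    · exact ⟨x, L, singleton_subset_iff.2 (self_mem_cylinder x L), hL.le.trans le_add_self⟩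
  · obtain ⟨x, L, hsub, hL⟩ := exists_cylinder_superset_of_ediam_pos hV
    refine ⟨x, L, hsub, ?_⟩
    calc ENNReal.ofReal (f ((1 / 2) ^ L)) = gaugeFn f (ENNReal.ofReal ((1 / 2) ^ L)) :=
          (gaugeFn_ofReal (by positivity)).symm
      _ ≤ gaugeFn f (ediam V) := hf.gaugeFn_mono hL
      _ ≤ gaugeFn f (ediam V) + ε := le_self_add

theorem IsGauge.exists_cylinder_cover (hf : IsGauge f) {A : Set (ℕ → Bool)}
    (hA : gaugeMeasure f A = 0) {ε : ℝ≥0∞} (hε : 0 < ε) :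
    ∃ (x : ℕ → ℕ → Bool) (L : ℕ → ℕ), A ⊆ ⋃ n, cylinder (x n) (L n) ∧
      ∑' n, ENNReal.ofReal (f ((1 / 2) ^ L n)) ≤ ε := by
  have hε2 : 0 < ε / 2 := ENNReal.half_pos hε.ne'
  obtain ⟨t, hcover, hsum⟩ := exists_cover_tsum_lt_of_gaugeMeasure_eq_zero hf hA hε2
  obtain ⟨δ, hδ, hδsum⟩ := ENNReal.exists_pos_sum_of_countable' hε2.ne' ℕ
  choose x L hsub hL using fun n => hf.exists_cylinder_superset (t n) (hδ n)
  refine ⟨x, L, hcover.trans (iUnion_mono hsub), ?_⟩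
  calc ∑' n, ENNReal.ofReal (f ((1 / 2) ^ L n))
      ≤ ∑' n, (gaugeFn f (ediam (t n)) + δ n) := ENNReal.tsum_le_tsum hL
    _ = ∑' n, gaugeFn f (ediam (t n)) + ∑' n, δ n := ENNReal.tsum_add
    _ ≤ ε / 2 + ε / 2 := add_le_add hsum.le hδsum.le
    _ = ε := ENNReal.add_halves ε

end Cylinder

section Ideal

variable {h : ℕ → ℕ} {A : Set (ℕ → Bool)}

theorem mem_Jg_of_frequently_mem_cylinder (w : ℕ → ℕ → Bool)
    (hA : ∀ z ∈ A, ∃ᶠ n in atTop, z ∈ cylinder (w n) (h n)) : A ∈ Jg h := by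
  refine ⟨fun n => List.ofFn fun i : Fin (h n) => w n i, fun n => List.length_ofFn,
    fun z hz => ?_⟩
  refine (hA z hz).mono fun n hn i hi => ?_
  simpa using (mem_cylinder_iff.1 hn i (by simpa using hi)).symm

theorem mem_Jg_of_injective {S : Type*} {ι : S → ℕ} (hι : Function.Injective ι)
    (x : S → ℕ → Bool) {L : S → ℕ} (hL : ∀ p, h (ι p) ≤ L p)
    (hA : ∀ z ∈ A, {p | z ∈ cylinder (x p) (L p)}.Infinite) : A ∈ Jg h := by
  refine mem_Jg_of_frequently_mem_cylinder (Function.extend ι x fun _ _ => false) fun z hz => ?_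
  refine Nat.frequently_atTop_iff_infinite.2 <| ((hA z hz).image hι.injOn).mono ?_
  rintro _ ⟨p, hp, rfl⟩
  rw [mem_ofPred_eq, hι.extend_apply]
  exact cylinder_anti _ (hL p) hp

theorem apply_le_of_two_mul_succ_le_two_pow (hh : Monotone h) {l k i : ℕ}
    (hk : k ≤ sInf {n | l < h (2 ^ n)}) (hi : 2 * (i + 1) ≤ 2 ^ k) : h i ≤ l := by
  obtain _ | k := k
  · omega
  have hik : i ≤ 2 ^ k := by rw [pow_succ] at hi; omega
  have hk' : k ∉ {n | l < h (2 ^ n)} := Nat.notMem_of_lt_sInf hk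
  exact (hh hik).trans (not_lt.1 hk')

end Ideal

theorem stmt9_general (e h : ℕ → ℕ) (hh : Monotone h)
    (heh : ∀ l : ℕ, e l ≤ sInf {n : ℕ | l < h (2 ^ n)})
    (f : ℝ → ℝ) (hf : IsGauge f)
    (hfe : ∀ k : ℕ, f ((1 / 2 : ℝ) ^ k) = (1 / 2 : ℝ) ^ (e k)) :
    ∀ A : Set (ℕ → Bool), gaugeMeasure f A = 0 → A ∈ Jg h := by
  intro A hA
  obtain ⟨ε, hε, hεsum⟩ :=
    ENNReal.exists_pos_sum_of_countable' (by norm_num : (2⁻¹ : ℝ≥0∞) ≠ 0) ℕ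
  choose x L hcover hsum using fun m => hf.exists_cylinder_cover hA (hε m)
  have hweight : ∑' q : ℕ × ℕ, (2⁻¹ : ℝ≥0∞) ^ e (L q.1 q.2) ≤ 2⁻¹ ^ 1 :=
    calc ∑' q : ℕ × ℕ, (2⁻¹ : ℝ≥0∞) ^ e (L q.1 q.2)
        = ∑' m, ∑' n, ENNReal.ofReal (f ((1 / 2) ^ L m n)) := by
          rw [ENNReal.tsum_prod (f := fun m n => (2⁻¹ : ℝ≥0∞) ^ e (L m n))]
          simp only [hfe, ofReal_one_half_pow]
      _ ≤ ∑' m, ε m := ENNReal.tsum_le_tsum hsum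
      _ ≤ 2⁻¹ ^ 1 := by rw [pow_one]; exact hεsum.le
  obtain ⟨ι, hι, hιle⟩ := exists_injective_two_pow_mul_succ_le _ hweight
  refine mem_Jg_of_injective hι (fun q => x q.1 q.2)
    (fun q => apply_le_of_two_mul_succ_le_two_pow hh (heh _) (hιle q)) fun z hz => ?_
  choose n hn using fun m => mem_iUnion.1 (hcover m hz)
  have hinj : Function.Injective fun m => (m, n m) := fun m m' hm => congrArg Prod.fst hm
  refine (infinite_range_of_injective hinj).mono ?_
  rintro _ ⟨m, rfl⟩
  exact hn m

/-- Suppose `e, h : ω → ω` are nondecreasing, `h` is unbounded, and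
`e l ≤ min {n : l < h(2^n)}` for all `l`. Let `f` be any gauge function with
`f(2^{-k}) = 2^{-e(k)}` for all `k`. Then every `A ⊆ 2^ω` with `ℋ^f(A) = 0` belongs
to `J_h`. -/
theorem stmt9 (e h : ℕ → ℕ) (he : Monotone e) (hh : Monotone h)
    (hunb : ∀ m : ℕ, ∃ n : ℕ, m < h n)
    (heh : ∀ l : ℕ, e l ≤ sInf {n : ℕ | l < h (2 ^ n)})
    (f : ℝ → ℝ) (hf : IsGauge f)
    (hfe : ∀ k : ℕ, f ((1 / 2 : ℝ) ^ k) = (1 / 2 : ℝ) ^ (e k)) :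
    ∀ A : Set (ℕ → Bool), gaugeMeasure f A = 0 → A ∈ Jg h :=
  stmt9_general e h hh heh f hf hfe
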